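/- Let p be a prime, k ≥ 3 an integer, V a finite set with a map part : V → {1,…,k}, and w : V × V → F_p a symmetric function. Consider the probability space in which: x is uniform on F_p; independently, for every node v ∈ V, the tuple (y_{v,j})_{j ∈ {1,…,k} \ {part(v)}} is uniform among tuples in F_p^{k−1} satisfying ∑_{j ≠ part(v)} y_{v,j} = 0; and all these random objects are mutually independent. For nodes a, b with part(a) = i ≠ j = part(b), define the random variable w'(a, b) = x·w(a, b) + y_{a,j} + y_{b,i}. Let (u_1, …, u_k) be a transversal with ∑_{1 ≤ i < j ≤ k} w(u_i, u_j) = 0, let (v_1, …, v_k) be a transversal with ∑_{1 ≤ i < j ≤ k} w(v_i, v_j) ≠ 0, and let S = {i : u_i = v_i}. Then the family of random variables w'(u_i, u_j) − w'(v_i, v_j), indexed by the pairs 1 ≤ i < j ≤ k such that not both i ∈ S and j ∈ S, is mutually independent. -/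

import Mathlib

/-!
Every difference `w'(u_i, u_j) - w'(v_i, v_j)` is an additive homomorphism from the finite
abelian group `Ω` to `F_p`, and `μ` is the uniform measure on `Ω`. A surjective homomorphism
pushes the uniform measure forward to the uniform measure, and the coordinates of the uniform
measure on `F_p^Q` (`Q` the set of pairs) are independent, so it suffices that the differences
are jointly surjective.

Given targets `c_ij`, put `x = -(∑ c) / ∑_{i<j} w(v_i, v_j)`; since `∑_{i<j} w(u_i, u_j) = 0`,
the remaining targets `c_ij - x (w(u_i, u_j) - w(v_i, v_j))` sum to zero. Set `y_{v_i} = 0` and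
`y_{u_i} = z_i`, where `z` splits each remaining target as `z_ij + z_ji`, has zero row sums and
vanishes on the rows with `u_i = v_i`. Such a `z` exists because some row `t` has `u_t ≠ v_t`,
and that row can absorb the sums of all other rows.
-/

open MeasureTheory ProbabilityTheory

namespace CliqueListingLB

variable (p k : ℕ) [Fact p.Prime] (V : Type) [Fintype V] [DecidableEq V] (part : V → Fin k)

/-- Zero-sum tuples of auxiliary values for a node `a`: functions `Fin k → ZMod p`
whose values over `j ≠ part a` sum to `0`.  (The coordinate `part a` itself is unused
by the hashed weights, so tuples here model tuples in `F_p^{k-1}` of sum zero.) -/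
def ZeroSumTuple (a : V) : Type :=
  {f : Fin k → ZMod p // ∑ j ∈ Finset.univ.filter (fun j => j ≠ part a), f j = 0}

instance (a : V) : Fintype (ZeroSumTuple p k V part a) := by
  unfold ZeroSumTuple; infer_instance

instance (a : V) : Nonempty (ZeroSumTuple p k V part a) :=
  ⟨⟨0, by simp⟩⟩

/-- The sample space: a uniform `x ∈ F_p` together with, independently for each node `a`,
a uniform zero-sum tuple of auxiliary values.  The product of uniform distributions on
finite sets is the uniform distribution on the (finite) product, so the uniform measure
on `Ω` is exactly the joint distribution described. -/
def Ω : Type := ZMod p × (∀ a : V, ZeroSumTuple p k V part a)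

instance : Fintype (Ω p k V part) := by unfold Ω; infer_instance

instance : Nonempty (Ω p k V part) := by unfold Ω; infer_instance

instance : MeasurableSpace (Ω p k V part) := ⊤

noncomputable def μ : Measure (Ω p k V part) :=
  (PMF.uniformOfFintype (Ω p k V part)).toMeasure

/-- The hashed weight `w'(a, b) = x * w(a, b) + y_{a, part b} + y_{b, part a}` as a random
variable of the sample point `ω = (x, y)`. -/
def hashedWeight (w : V → V → ZMod p) (ω : Ω p k V part) (a b : V) : ZMod p :=
  ω.1 * w a b + (ω.2 a).1 (part b) + (ω.2 b).1 (part a)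

theorem _root_.AddMonoidHom.card_ker_mul_card_of_surjective {A B : Type*} [AddGroup A]
    [AddGroup B] {f : A →+ B} (hf : Function.Surjective f) :
    Nat.card f.ker * Nat.card B = Nat.card A := by
  rw [← f.ker.card_mul_index, AddSubgroup.index_ker, f.range_eq_top_of_surjective hf,
    AddSubgroup.card_top]

theorem _root_.AddMonoidHom.map_uniformOfFintype_of_surjective {A B : Type*} [AddGroup A]
    [Fintype A] [MeasurableSpace A] [DiscreteMeasurableSpace A] [AddGroup B] [Fintype B]
    [MeasurableSpace B] [DiscreteMeasurableSpace B] {f : A →+ B} (hf : Function.Surjective f) :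
    (PMF.uniformOfFintype A).toMeasure.map f = (PMF.uniformOfFintype B).toMeasure := by
  classical
  refine Measure.ext_iff_singleton.2 fun b => ?_
  obtain ⟨a, rfl⟩ := hf b
  rw [Measure.map_apply .of_discrete .of_discrete,
    PMF.toMeasure_uniformOfFintype_apply _ .of_discrete,
    PMF.toMeasure_apply_singleton _ _ .of_discrete, PMF.uniformOfFintype_apply,
    ← Nat.card_eq_fintype_card, Nat.card_congr (f.fiberEquivKer a), ENNReal.div_eq_inv_mul,
    ← Nat.card_eq_fintype_card, ← f.card_ker_mul_card_of_surjective hf, Nat.cast_mul,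
    ENNReal.mul_inv (by simp) (by simp), mul_right_comm,
    ENNReal.inv_mul_cancel (Nat.cast_ne_zero.2 Nat.card_pos.ne') (by simp), one_mul,
    Nat.card_eq_fintype_card]

theorem _root_.PMF.toMeasure_uniformOfFintype_eq_uniformOn {α : Type*} [Fintype α] [Nonempty α]
    [MeasurableSpace α] [DiscreteMeasurableSpace α] :
    (PMF.uniformOfFintype α).toMeasure = uniformOn Set.univ := by
  classical
  ext s hs
  rw [PMF.toMeasure_uniformOfFintype_apply _ hs, uniformOn_univ,
    Measure.count_apply_finite _ s.toFinite]
  simp [Set.toFinset_card]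

theorem _root_.PMF.toMeasure_uniformOfFintype_pi {ι B : Type*} [Fintype ι] [DecidableEq ι]
    [Fintype B] [Nonempty B] [MeasurableSpace B] [DiscreteMeasurableSpace B] :
    (PMF.uniformOfFintype (ι → B)).toMeasure
      = Measure.pi fun _ : ι => (PMF.uniformOfFintype B).toMeasure := by
  simp only [PMF.toMeasure_uniformOfFintype_eq_uniformOn]
  rw [← uniformOn_pi, Set.pi_univ]

theorem _root_.AddMonoidHom.iIndepFun_uniformOfFintype_of_surjective {A B ι : Type*}
    [AddGroup A] [Fintype A] [MeasurableSpace A] [DiscreteMeasurableSpace A] [AddGroup B]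
    [Fintype B] [MeasurableSpace B] [DiscreteMeasurableSpace B] [Fintype ι] [DecidableEq ι]
    {f : A →+ (ι → B)} (hf : Function.Surjective f) :
    iIndepFun (fun i a => f a i) (PMF.uniformOfFintype A).toMeasure := by
  rw [iIndepFun_iff_map_fun_eq_pi_map fun _ => .of_discrete]
  have hf_eval (i : ι) : Function.Surjective ((Pi.evalAddMonoidHom _ i).comp f) :=
    (Function.surjective_eval i).comp hf
  rw [f.map_uniformOfFintype_of_surjective hf, PMF.toMeasure_uniformOfFintype_pi]
  exact congrArg Measure.pi <| funext fun i =>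
    (AddMonoidHom.map_uniformOfFintype_of_surjective (hf_eval i)).symm

open Finset

section RowBalance

variable {ι M : Type*} [Fintype ι] [DecidableEq ι] [AddCommGroup M]

-- an antisymmetric correction that moves the sum of every row into row `t`
def rowBalance (b : ι → ι → M) (t i j : ι) : M :=
  b i j - (if j = t then ∑ l, b i l else 0) + (if i = t then ∑ l, b j l else 0)

variable (b : ι → ι → M) (t : ι)

theorem rowBalance_add_swap (i j : ι) :
    rowBalance b t i j + rowBalance b t j i = b i j + b j i := by
  unfold rowBalance
  split_ifs <;> abel

theorem rowBalance_self (i : ι) : rowBalance b t i i = b i i := by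
  unfold rowBalance
  split_ifs <;> abel

theorem sum_rowBalance (i : ι) :
    ∑ j, rowBalance b t i j = if i = t then ∑ i, ∑ j, b i j else 0 := by
  simp only [rowBalance, sum_add_distrib, sum_sub_distrib, sum_ite_eq', mem_univ, if_true]
  split_ifs <;> simp

theorem rowBalance_eq_zero {i : ι} (hi : i ≠ t) (hb : b i = 0) : rowBalance b t i = 0 := by
  ext j
  simp [rowBalance, hi, hb]

end RowBalance

theorem exists_rowSum_eq_zero_add_swap_eq {ι M : Type*} [Fintype ι] [DecidableEq ι]
    [AddCommGroup M] {S : ι → Prop} [DecidablePred S] {t : ι} (ht : ¬ S t)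
    {g : ι → ι → M} (hg : ∑ i, ∑ j, g i j = 0) (hgS : ∀ i j, S i → S j → g i j = 0) :
    ∃ z : ι → ι → M, (∀ i, S i → z i = 0) ∧ (∀ i, z i i = g i i) ∧ (∀ i, ∑ j, z i j = 0) ∧
      ∀ i j, z i j + z j i = g i j + g j i := by
  -- adding `a j i - a i j` moves the entries of the rows in `S` to the transposed positions
  set a : ι → ι → M := fun i j => if S i then g i j else 0
  set b : ι → ι → M := fun i j => g i j - a i j + a j i
  have hb_sum : ∑ i, ∑ j, b i j = 0 := by
    simp only [b, sum_add_distrib, sum_sub_distrib, hg]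
    rw [sum_comm (f := fun i j => a j i), zero_sub, neg_add_cancel]
  have hbS (i : ι) (hi : S i) : b i = 0 := by
    ext j
    by_cases hj : S j <;> simp [b, a, hi, hj, hgS]
  refine ⟨rowBalance b t, fun i hi => rowBalance_eq_zero b t (fun h => ht (h ▸ hi)) (hbS i hi),
    fun i => (rowBalance_self b t i).trans (sub_add_cancel _ _), fun i => ?_, fun i j => ?_⟩
  · rw [sum_rowBalance, hb_sum, ite_self]
  · rw [rowBalance_add_swap]
    simp only [b]
    abel

def zeroSumSubgroup (a : V) : AddSubgroup (Fin k → ZMod p) where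
  carrier := {f | ∑ j ∈ univ.filter (fun j => j ≠ part a), f j = 0}
  add_mem' hf hg := by simp_all [sum_add_distrib]
  zero_mem' := by simp
  neg_mem' hf := by simp_all

instance (a : V) : AddCommGroup (ZeroSumTuple p k V part a) :=
  inferInstanceAs (AddCommGroup (zeroSumSubgroup p k V part a))

instance : AddCommGroup (Ω p k V part) :=
  inferInstanceAs (AddCommGroup (ZMod p × ∀ a, ZeroSumTuple p k V part a))

instance : DiscreteMeasurableSpace (Ω p k V part) := ⟨fun _ => trivial⟩

def hashedWeightHom (w : V → V → ZMod p) (a b : V) : Ω p k V part →+ ZMod p where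
  toFun ω := hashedWeight p k V part w ω a b
  map_zero' := by
    change 0 * w a b + 0 + 0 = 0
    ring
  map_add' ω ω' := by
    change (ω.1 + ω'.1) * w a b + ((ω.2 a).1 (part b) + (ω'.2 a).1 (part b))
      + ((ω.2 b).1 (part a) + (ω'.2 b).1 (part a)) = _
    simp only [hashedWeight]
    ring

theorem exists_zeroSumTuple_eq_on_transversals (V : Type) [DecidableEq V] (part : V → Fin k)
    {u v : Fin k → V} (hu : ∀ i, part (u i) = i) (hv : ∀ i, part (v i) = i)
    {z : Fin k → Fin k → ZMod p} (hz : ∀ i, ∑ j ∈ univ.filter (fun j => j ≠ i), z i j = 0)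
    (hzS : ∀ i, u i = v i → z i = 0) :
    ∃ y : ∀ a, ZeroSumTuple p k V part a, ∀ i, (y (u i)).1 = z i ∧ (y (v i)).1 = 0 := by
  refine ⟨fun a => if a = u (part a) then ⟨z (part a), hz (part a)⟩ else 0, fun i => ⟨?_, ?_⟩⟩
  · simp [hu]
  · by_cases h : v i = u i
    · simp [hv, ← h, hzS i h.symm]
    · simp [hv, h]
      rfl

theorem exists_hashedWeight_sub_eq (V : Type) [DecidableEq V] (part : V → Fin k)
    (w : V → V → ZMod p) {u v : Fin k → V} (hu : ∀ i, part (u i) = i) (hv : ∀ i, part (v i) = i)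
    (hu0 : ∑ q ∈ univ.filter (fun q : Fin k × Fin k => q.1 < q.2), w (u q.1) (u q.2) = 0)
    (hv0 : ∑ q ∈ univ.filter (fun q : Fin k × Fin k => q.1 < q.2), w (v q.1) (v q.2) ≠ 0)
    (c : Fin k → Fin k → ZMod p) :
    ∃ ω : Ω p k V part, ∀ i j, i < j → ¬(u i = v i ∧ u j = v j) →
      hashedWeight p k V part w ω (u i) (u j) - hashedWeight p k V part w ω (v i) (v j)
        = c i j := by
  obtain ⟨t, ht⟩ : ∃ t, u t ≠ v t := Function.ne_iff.1 (by rintro rfl; exact hv0 hu0)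
  set P : Fin k → Fin k → Prop := fun i j => i < j ∧ ¬(u i = v i ∧ u j = v j)
  set e : Fin k → Fin k → ZMod p := fun i j => w (u i) (u j) - w (v i) (v j)
  set σ := ∑ q ∈ univ.filter (fun q : Fin k × Fin k => q.1 < q.2), w (v q.1) (v q.2)
  set x := -(∑ q ∈ univ.filter (fun q : Fin k × Fin k => P q.1 q.2), c q.1 q.2) / σ
  set g : Fin k → Fin k → ZMod p := fun i j => if P i j then c i j - x * e i j else 0
  have he : ∑ q ∈ univ.filter (fun q : Fin k × Fin k => P q.1 q.2), e q.1 q.2 = -σ := by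
    rw [← filter_filter, sum_filter_of_ne, sum_sub_distrib, hu0, zero_sub]
    rintro q - hq ⟨h₁, h₂⟩
    exact hq (by simp [e, h₁, h₂])
  have hg : ∑ i, ∑ j, g i j = 0 := by
    rw [← Fintype.sum_prod_type', ← sum_filter, sum_sub_distrib, ← mul_sum, he, mul_neg,
      sub_neg_eq_add, div_mul_cancel₀ _ hv0, add_neg_cancel]
  obtain ⟨z, hzS, hzdiag, hzsum, hzswap⟩ := exists_rowSum_eq_zero_add_swap_eq
    (S := fun i => u i = v i) ht hg (fun i j hi hj => if_neg fun h => h.2 ⟨hi, hj⟩)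
  have hz (i : Fin k) : ∑ j ∈ univ.filter (fun j => j ≠ i), z i j = 0 := by
    rw [filter_ne', sum_erase _ ((hzdiag i).trans (if_neg fun h => lt_irrefl i h.1))]
    exact hzsum i
  obtain ⟨y, hy⟩ := exists_zeroSumTuple_eq_on_transversals p k V part hu hv hz hzS
  refine ⟨(x, y), fun i j hij hS => ?_⟩
  have hsplit := hzswap i j
  simp only [g, if_pos (show P i j from ⟨hij, hS⟩), if_neg fun h : P j i => lt_asymm hij h.1,
    add_zero] at hsplit
  change x * w (u i) (u j) + (y (u i)).1 (part (u j)) + (y (u j)).1 (part (u i))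
    - (x * w (v i) (v j) + (y (v i)).1 (part (v j)) + (y (v j)).1 (part (v i))) = c i j
  rw [(hy i).1, (hy j).1, (hy i).2, (hy j).2, hu, hu, Pi.zero_apply, Pi.zero_apply]
  linear_combination hsplit

theorem iIndepFun_hashedWeight_sub
    (w : V → V → ZMod p)
    (u v : Fin k → V) (hu : ∀ i, part (u i) = i) (hv : ∀ i, part (v i) = i)
    (hu0 : ∑ q ∈ Finset.univ.filter (fun q : Fin k × Fin k => q.1 < q.2),
      w (u q.1) (u q.2) = 0)
    (hv0 : ∑ q ∈ Finset.univ.filter (fun q : Fin k × Fin k => q.1 < q.2),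
      w (v q.1) (v q.2) ≠ 0) :
    iIndepFun (m := fun _ => (⊤ : MeasurableSpace (ZMod p)))
      (fun (q : {q : Fin k × Fin k // q.1 < q.2 ∧ ¬(u q.1 = v q.1 ∧ u q.2 = v q.2)})
           (ω : Ω p k V part) =>
        hashedWeight p k V part w ω (u q.1.1) (u q.1.2)
          - hashedWeight p k V part w ω (v q.1.1) (v q.1.2))
      (μ p k V part) := by
  let f : Ω p k V part →+
      ({q : Fin k × Fin k // q.1 < q.2 ∧ ¬(u q.1 = v q.1 ∧ u q.2 = v q.2)} → ZMod p) :=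
    AddMonoidHom.pi fun q => hashedWeightHom p k V part w (u q.1.1) (u q.1.2)
      - hashedWeightHom p k V part w (v q.1.1) (v q.1.2)
  have hf : Function.Surjective f := by
    intro c
    obtain ⟨ω, hω⟩ := exists_hashedWeight_sub_eq p k V part w hu hv hu0 hv0 fun i j =>
      if h : i < j ∧ ¬(u i = v i ∧ u j = v j) then c ⟨(i, j), h⟩ else 0
    exact ⟨ω, funext fun q => (hω _ _ q.2.1 q.2.2).trans (dif_pos q.2)⟩
  exact f.iIndepFun_uniformOfFintype_of_surjective hf

end CliqueListingLB
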